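/- Let (K_j), (N_j), (L_j) be sequences of positive integers such that K_j > 3·N_j/L_j for every j, L_j → ∞, L_j/N_j → 1, and 1/K_j → 0 as j → ∞. Then the optimality factor ρ_j = N_j / sqrt( N_j · L_j · ( 1 − 2·sqrt( N_j / (3·K_j·L_j) ) ) ) tends to 1 as j → ∞; in other words, the aperiodic (K_j, N_j, L_j, N_j, Π_j)-DRCS sets constructed by the paper (with Π_j = (−L_j, L_j) × (−L_j, L_j)) are asymptotically optimal with respect to the aperiodic lower bound θ̂_max ≥ sqrt( M·N·(1 − 2·sqrt(M/(3·K·Z_y))) ). -/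

import Mathlib

open Filter

/-- The optimality factor of an aperiodic `(K, N, L, N, Π)`-DRCS set with
flock size `N`, sequence length `L`, `Z_x = Z_y = L` and `θ̂_max = N`, relative
to the aperiodic lower bound `θ̂_max ≥ sqrt(M·N·(1 − 2·sqrt(M/(3·K·Z_y))))`. -/
noncomputable def optFactor (K N L : ℕ) : ℝ :=
  (N : ℝ) / Real.sqrt ((N : ℝ) * L * (1 - 2 * Real.sqrt ((N : ℝ) / (3 * K * L))))

/-- Theorem 4: if `K_j > 3·N_j/L_j` for every `j`, `L_j → ∞`,
`L_j/N_j → 1` and `1/K_j → 0`, then the optimality factor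
`ρ_j = N_j / sqrt(N_j·L_j·(1 − 2·sqrt(N_j/(3·K_j·L_j))))` tends to `1`, i.e.
the aperiodic `(K_j, N_j, L_j, N_j, Π_j)`-DRCS sets are asymptotically
optimal. -/
theorem stmt17 (K N L : ℕ → ℕ)
    (hKpos : ∀ j, 0 < K j) (hNpos : ∀ j, 0 < N j) (hLpos : ∀ j, 0 < L j)
    (hK : ∀ j, (3 : ℝ) * N j / L j < K j)
    (hLtop : Tendsto (fun j => (L j : ℝ)) atTop atTop)
    (hLN : Tendsto (fun j => (L j : ℝ) / N j) atTop (nhds 1))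
    (hKinf : Tendsto (fun j => (1 : ℝ) / K j) atTop (nhds 0)) :
    Tendsto (fun j => optFactor (K j) (N j) (L j)) atTop (nhds 1) := by
  -- N/L → 1
  have hNL : Tendsto (fun j => (N j : ℝ) / L j) atTop (nhds 1) := by
    have h := hLN.inv₀ (by norm_num)
    simp only [inv_one] at h
    exact h.congr fun j => by rw [inv_div]
  -- 1/(3K) → 0
  have h3K : Tendsto (fun j => (1 : ℝ) / (3 * K j)) atTop (nhds 0) := by
    have h := hKinf.const_mul ((1 : ℝ) / 3)
    rw [mul_zero] at h
    exact h.congr fun j => by ring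
  -- sqrt(N/(3KL)) → 0
  have hsq : Tendsto (fun j => Real.sqrt ((N j : ℝ) / (3 * K j * L j)))
      atTop (nhds 0) := by
    have hprod := hNL.mul h3K
    rw [mul_zero] at hprod
    have h := (Real.continuous_sqrt.tendsto 0).comp hprod
    simp only [Function.comp_def, Real.sqrt_zero] at h
    refine h.congr fun j => ?_
    congr 1
    ring
  -- the inner expression (L/N)·(1 − 2√(N/(3KL))) → 1
  have hX : Tendsto (fun j => (L j : ℝ) / N j *
      (1 - 2 * Real.sqrt ((N j : ℝ) / (3 * K j * L j)))) atTop (nhds 1) := by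
    have h := hLN.mul ((tendsto_const_nhds (x := (1 : ℝ))).sub (hsq.const_mul 2))
    simp only [mul_zero, sub_zero, mul_one, one_mul] at h
    exact h
  -- sqrt of that → 1, and its inverse → 1
  have hS : Tendsto (fun j => Real.sqrt ((L j : ℝ) / N j *
      (1 - 2 * Real.sqrt ((N j : ℝ) / (3 * K j * L j))))) atTop (nhds 1) := by
    have h := (Real.continuous_sqrt.tendsto 1).comp hX
    simpa [Function.comp_def, Real.sqrt_one] using h
  have hfin : Tendsto (fun j => 1 / Real.sqrt ((L j : ℝ) / N j *
      (1 - 2 * Real.sqrt ((N j : ℝ) / (3 * K j * L j))))) atTop (nhds 1) := by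
    have h := hS.inv₀ (by norm_num)
    simpa [one_div] using h
  refine hfin.congr fun j => ?_
  -- pointwise equality of ρ with 1/sqrt((L/N)·X)
  have hn : (0 : ℝ) < N j := by exact_mod_cast hNpos j
  have hl : (0 : ℝ) < L j := by exact_mod_cast hLpos j
  have hk : (0 : ℝ) < K j := by exact_mod_cast hKpos j
  set s : ℝ := Real.sqrt ((N j : ℝ) / (3 * K j * L j)) with hs
  have h9 : (N j : ℝ) / (3 * K j * L j) < 1 / 9 := by
    rw [div_lt_div_iff₀ (by positivity) (by norm_num)]
    have h := hK j
    rw [div_lt_iff₀ hl] at h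
    nlinarith
  have hslt : s < 1 / 3 := by
    have h := Real.sqrt_lt_sqrt (by positivity) h9
    rwa [show Real.sqrt (1 / 9) = 1 / 3 by
      rw [show (1 / 9 : ℝ) = (1 / 3) ^ 2 by norm_num, Real.sqrt_sq (by norm_num)]] at h
  have hs0 : 0 ≤ s := Real.sqrt_nonneg _
  have hXpos : (0 : ℝ) < 1 - 2 * s := by linarith
  have hA : (0 : ℝ) ≤ (N j : ℝ) * L j * (1 - 2 * s) := by positivity
  have key : Real.sqrt ((L j : ℝ) / N j * (1 - 2 * s))
      = Real.sqrt ((N j : ℝ) * L j * (1 - 2 * s)) / N j := by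
    rw [show (L j : ℝ) / N j * (1 - 2 * s)
        = ((N j : ℝ) * L j * (1 - 2 * s)) / (N j : ℝ) ^ 2 by
      field_simp]
    rw [Real.sqrt_div hA, Real.sqrt_sq hn.le]
  rw [key, one_div_div]
  rfl
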